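/- arXiv:2101.03236 — 2 statements merged into one kernel-verified Lean document; each statement's English description precedes it below -/
import Mathlib

section
/- The function g : ℝ → ℝ ∪ {+∞} defined by g(x) = -x - log(1 - e^x) for x < 0 and g(x) = +∞ for x ≥ 0 is convex on ℝ. -/
/-- Real convexity inequality for `f x = -x - log (1 - exp x)` on negatives. -/
lemma gail_cost_real_ineq {x y a b : ℝ} (hx : x < 0) (hy : y < 0)
    (ha : 0 ≤ a) (hb : 0 ≤ b) (hab : a + b = 1) :
    -(a * x + b * y) - Real.log (1 - Real.exp (a * x + b * y)) ≤
      a * (-x - Real.log (1 - Real.exp x)) + b * (-y - Real.log (1 - Real.exp y)) := by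
  have hux : (0:ℝ) < 1 - Real.exp x := by
    have := Real.exp_lt_one_iff.mpr hx; linarith
  have huy : (0:ℝ) < 1 - Real.exp y := by
    have := Real.exp_lt_one_iff.mpr hy; linarith
  -- exp of combination ≤ combination of exps
  have hexp : Real.exp (a * x + b * y) ≤ a * Real.exp x + b * Real.exp y := by
    have := convexOn_exp.2 (Set.mem_univ x) (Set.mem_univ y) ha hb hab
    simpa [smul_eq_mul] using this
  have hcomb : (0:ℝ) < a * (1 - Real.exp x) + b * (1 - Real.exp y) := by
    rcases eq_or_lt_of_le ha with ha' | ha'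
    · have hb1 : b = 1 := by linarith
      rw [← ha', hb1]; simpa using huy
    · nlinarith [mul_nonneg hb huy.le, mul_pos ha' hux]
  -- concavity of log
  have hlog : a * Real.log (1 - Real.exp x) + b * Real.log (1 - Real.exp y) ≤
      Real.log (a * (1 - Real.exp x) + b * (1 - Real.exp y)) := by
    have := strictConcaveOn_log_Ioi.concaveOn.2 (Set.mem_Ioi.mpr hux)
      (Set.mem_Ioi.mpr huy) ha hb hab
    simpa [smul_eq_mul] using this
  have hmono : Real.log (a * (1 - Real.exp x) + b * (1 - Real.exp y)) ≤
      Real.log (1 - Real.exp (a * x + b * y)) := by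
    apply Real.log_le_log hcomb
    nlinarith
  nlinarith [hlog.trans hmono]

/-- The extended-real-valued GAIL cost `g(x) = -x - log(1 - eˣ)` for `x < 0`,
`g(x) = +∞` for `x ≥ 0`, is convex on ℝ (with the convention `0 · ∞ = 0`). -/
theorem gail_cost_convex (g : ℝ → EReal)
    (hg : ∀ x, g x = if x < 0 then ((-x - Real.log (1 - Real.exp x) : ℝ) : EReal) else ⊤) :
    ∀ x y a b : ℝ, 0 ≤ a → 0 ≤ b → a + b = 1 →
      g (a * x + b * y) ≤ (a : EReal) * g x + (b : EReal) * g y := by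
  intro x y a b ha hb hab
  have hmul_ne_bot : ∀ (c : ℝ) z, 0 < c → (c : EReal) * g z ≠ ⊥ := by
    intro c z hc; rw [hg z]; split
    · rw [← EReal.coe_mul]; exact EReal.coe_ne_bot _
    · rw [EReal.mul_top_of_pos (by exact_mod_cast hc)]; simp
  rcases eq_or_lt_of_le ha with ha0 | ha0
  · -- a = 0, b = 1
    have hb1 : b = 1 := by linarith
    rw [← ha0, hb1]
    simp
  rcases eq_or_lt_of_le hb with hb0 | hb0
  · have ha1 : a = 1 := by linarith
    rw [← hb0, ha1]
    simp
  by_cases hx : x < 0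
  · by_cases hy : y < 0
    · have hxy : a * x + b * y < 0 := by nlinarith
      rw [hg x, hg y, hg _, if_pos hx, if_pos hy, if_pos hxy]
      rw [← EReal.coe_mul, ← EReal.coe_mul, ← EReal.coe_add, EReal.coe_le_coe_iff]
      exact gail_cost_real_ineq hx hy ha hb hab
    · -- g y = ⊤
      rw [hg y, if_neg hy]
      have : (b : EReal) * ⊤ = ⊤ := by
        rw [EReal.mul_top_of_pos]; exact_mod_cast hb0
      rw [this, EReal.add_top_of_ne_bot (hmul_ne_bot a x ha0)]
      exact le_top
  · rw [hg x, if_neg hx]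
    have : (a : EReal) * ⊤ = ⊤ := by
      rw [EReal.mul_top_of_pos]; exact_mod_cast ha0
    rw [this, EReal.top_add_of_ne_bot (hmul_ne_bot b y hb0)]
    exact le_top
end

section
/- Let p and q be probability distributions on Y and let J(D) = E_{y∼p}[log D(y)] + E_{y∼q}[log(1-D(y))]. Then sup_{D : Y → (0,1)} J(D) = -2 log 2 + 2·JSD(p ‖ q), where JSD denotes the Jensen–Shannon divergence. In particular the supremum equals -2 log 2 if and only if p = q. -/
/-!
For each `y`, the map `d ↦ p y * log d + q y * log (1 - d)` is maximised on `(0, 1)` at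
`d = p y / (p y + q y)`; both this and the nonnegativity of the Jensen–Shannon summands are
instances of `log x ≤ x - 1`. At the optimal discriminator the objective equals
`∑ y, (p y * log (p y / m y) + q y * log (q y / m y)) - 2 log 2` with `m = (p + q) / 2`, and the sum
vanishes only when every summand does, i.e. when `p = q`.
-/

open Real Finset

lemma mul_log_div_le_sub {a x : ℝ} (ha : 0 < a) (hx : 0 < x) : a * log (x / a) ≤ x - a :=
  calc a * log (x / a) ≤ a * (x / a - 1) :=
        mul_le_mul_of_nonneg_left (log_le_sub_one_of_pos (div_pos hx ha)) ha.le
    _ = x - a := by field_simp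

lemma mul_log_div_lt_sub {a x : ℝ} (ha : 0 < a) (hx : 0 < x) (hxa : x ≠ a) :
    a * log (x / a) < x - a :=
  calc a * log (x / a) < a * (x / a - 1) :=
        mul_lt_mul_of_pos_left
          (log_lt_sub_one_of_pos (div_pos hx ha) (by rwa [Ne, div_eq_one_iff_eq ha.ne'])) ha
    _ = x - a := by field_simp

lemma mul_log_add_mul_log_one_sub_le {a b d : ℝ} (ha : 0 < a) (hb : 0 < b) (hd : d ∈ Set.Ioo 0 1) :
    a * log d + b * log (1 - d) ≤ a * log (a / (a + b)) + b * log (b / (a + b)) := by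
  obtain ⟨hd0, hd1⟩ := hd
  have hab : 0 < a + b := add_pos ha hb
  have hpos := mul_log_div_le_sub ha (mul_pos hd0 hab)
  have hneg := mul_log_div_le_sub hb (mul_pos (sub_pos.2 hd1) hab)
  rw [show d * (a + b) / a = d / (a / (a + b)) by field_simp, log_div hd0.ne' (by positivity),
    mul_sub] at hpos
  rw [show (1 - d) * (a + b) / b = (1 - d) / (b / (a + b)) by field_simp,
    log_div (sub_pos.2 hd1).ne' (by positivity), mul_sub] at hneg
  linarith

lemma mul_log_div_add_eq_mul_log_div_half_add {a b : ℝ} (ha : 0 < a) (hb : 0 < b) :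
    a * log (a / (a + b)) + b * log (b / (a + b)) =
      a * log (a / ((a + b) / 2)) + b * log (b / ((a + b) / 2)) - (a + b) * log 2 := by
  have hab : 0 < a + b := add_pos ha hb
  rw [show a / (a + b) = a / ((a + b) / 2) / 2 by field_simp,
    show b / (a + b) = b / ((a + b) / 2) / 2 by field_simp,
    log_div (by positivity) two_ne_zero, log_div (by positivity) two_ne_zero]
  ring

lemma jsd_summand_nonneg {a b : ℝ} (ha : 0 < a) (hb : 0 < b) :
    0 ≤ a * log (a / ((a + b) / 2)) + b * log (b / ((a + b) / 2)) := by
  have hm : 0 < (a + b) / 2 := by positivity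
  have hpos := mul_log_div_le_sub ha hm
  have hneg := mul_log_div_le_sub hb hm
  rw [← inv_div, log_inv] at hpos hneg
  linarith

lemma jsd_summand_eq_zero_iff {a b : ℝ} (ha : 0 < a) (hb : 0 < b) :
    a * log (a / ((a + b) / 2)) + b * log (b / ((a + b) / 2)) = 0 ↔ a = b := by
  refine ⟨fun h ↦ ?_, ?_⟩
  · by_contra hab
    have hm : 0 < (a + b) / 2 := by positivity
    have hpos := mul_log_div_lt_sub ha hm (by contrapose! hab; linarith)
    have hneg := mul_log_div_le_sub hb hm
    rw [← inv_div, log_inv] at hpos hneg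
    linarith
  · rintro rfl
    rw [show (a + a) / 2 = a by ring, div_self ha.ne', log_one]
    ring

section Discriminator

variable {Y : Type*} [Fintype Y] {p q : Y → ℝ}

theorem iSup_discriminator_objective (hp : ∀ y, 0 < p y) (hq : ∀ y, 0 < q y) :
    (⨆ D : {D : Y → ℝ // ∀ y, D y ∈ Set.Ioo (0:ℝ) 1},
        (∑ y, p y * log (D.1 y) + ∑ y, q y * log (1 - D.1 y))) =
      ∑ y, (p y * log (p y / (p y + q y)) + q y * log (q y / (p y + q y))) := by
  have hpq : ∀ y, 0 < p y + q y := fun y ↦ add_pos (hp y) (hq y)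
  let Dopt : {D : Y → ℝ // ∀ y, D y ∈ Set.Ioo (0:ℝ) 1} :=
    ⟨fun y ↦ p y / (p y + q y), fun y ↦
      ⟨div_pos (hp y) (hpq y), (div_lt_one (hpq y)).2 (lt_add_of_pos_right _ (hq y))⟩⟩
  have hopt : ∀ y, 1 - p y / (p y + q y) = q y / (p y + q y) := fun y ↦ by
    field_simp [(hpq y).ne']; ring
  have : Nonempty {D : Y → ℝ // ∀ y, D y ∈ Set.Ioo (0:ℝ) 1} := ⟨Dopt⟩
  refine ciSup_eq_of_forall_le_of_forall_lt_exists_gt (fun D ↦ ?_) (fun w hw ↦ ⟨Dopt, ?_⟩)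
  · rw [← sum_add_distrib]
    exact sum_le_sum fun y _ ↦ mul_log_add_mul_log_one_sub_le (hp y) (hq y) (D.2 y)
  · simpa only [Dopt, hopt, ← sum_add_distrib] using hw

theorem sum_jsd_summand_eq_zero_iff (hp : ∀ y, 0 < p y) (hq : ∀ y, 0 < q y) :
    ∑ y, (p y * log (p y / ((p y + q y) / 2)) + q y * log (q y / ((p y + q y) / 2))) = 0 ↔
      p = q := by
  rw [sum_eq_zero_iff_of_nonneg fun y _ ↦ jsd_summand_nonneg (hp y) (hq y), funext_iff]
  simp only [mem_univ, true_imp_iff, jsd_summand_eq_zero_iff (hp _) (hq _)]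

end Discriminator

theorem discriminator_sup_JSD_general {Y : Type*} [Fintype Y] (p q : Y → ℝ)
    (hp : ∀ y, 0 < p y) (hq : ∀ y, 0 < q y)
    (hps : ∑ y, p y = 1) (hqs : ∑ y, q y = 1) :
    ((⨆ D : {D : Y → ℝ // ∀ y, D y ∈ Set.Ioo (0:ℝ) 1},
        (∑ y, p y * Real.log (D.1 y) + ∑ y, q y * Real.log (1 - D.1 y)))
      = -2 * Real.log 2 +
          2 * ((1/2) * ∑ y, p y * Real.log (p y / ((p y + q y) / 2))
             + (1/2) * ∑ y, q y * Real.log (q y / ((p y + q y) / 2)))) ∧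
    ((⨆ D : {D : Y → ℝ // ∀ y, D y ∈ Set.Ioo (0:ℝ) 1},
        (∑ y, p y * Real.log (D.1 y) + ∑ y, q y * Real.log (1 - D.1 y)))
      = -2 * Real.log 2 ↔ p = q) := by
  have hsup : (⨆ D : {D : Y → ℝ // ∀ y, D y ∈ Set.Ioo (0:ℝ) 1},
        (∑ y, p y * log (D.1 y) + ∑ y, q y * log (1 - D.1 y))) =
      ∑ y, (p y * log (p y / ((p y + q y) / 2)) + q y * log (q y / ((p y + q y) / 2)))
        - 2 * log 2 := by
    rw [iSup_discriminator_objective hp hq,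
      sum_congr rfl fun y _ ↦ mul_log_div_add_eq_mul_log_div_half_add (hp y) (hq y),
      sum_sub_distrib, ← sum_mul, sum_add_distrib (f := p), hps, hqs]
    ring
  refine ⟨by rw [hsup, sum_add_distrib]; ring, ?_⟩
  rw [hsup, ← sum_jsd_summand_eq_zero_iff hp hq]
  constructor <;> intro h <;> linarith

/-- The optimal value of the GAN discriminator objective equals
`-2 log 2 + 2 JSD(p ‖ q)`, and equals `-2 log 2` iff `p = q`
(finite sample space, positive probability mass functions). -/
theorem discriminator_sup_JSD {Y : Type*} [Fintype Y] [Nonempty Y] (p q : Y → ℝ)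
    (hp : ∀ y, 0 < p y) (hq : ∀ y, 0 < q y)
    (hps : ∑ y, p y = 1) (hqs : ∑ y, q y = 1) :
    ((⨆ D : {D : Y → ℝ // ∀ y, D y ∈ Set.Ioo (0:ℝ) 1},
        (∑ y, p y * Real.log (D.1 y) + ∑ y, q y * Real.log (1 - D.1 y)))
      = -2 * Real.log 2 +
          2 * ((1/2) * ∑ y, p y * Real.log (p y / ((p y + q y) / 2))
             + (1/2) * ∑ y, q y * Real.log (q y / ((p y + q y) / 2)))) ∧
    ((⨆ D : {D : Y → ℝ // ∀ y, D y ∈ Set.Ioo (0:ℝ) 1},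
        (∑ y, p y * Real.log (D.1 y) + ∑ y, q y * Real.log (1 - D.1 y)))
      = -2 * Real.log 2 ↔ p = q) :=
  discriminator_sup_JSD_general p q hp hq hps hqs
end
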